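/- Let m, n ≥ 2 be integers. The Seidel energy of the complete 3-uniform bipartite hypergraph C^3_{m,n} satisfies E_S(C^3_{m,n}) = (m-1)(2n-1) + (n-1)(2m-1) + √(U(m,n)), where U(m,n) = 16 m^3 n + n^2 + 2mn(8n^2 - 40n + 49) + m^2(32n^2 - 80n + 1). -/

import Mathlib

/-!
The Seidel matrix is `U B Uᵀ - D`, where `U` is the `0/1` indicator matrix of the two blocks,
`B = [[a, c], [c, b]]` collects the three off-diagonal values and `D = diag(a, …, a, b, …, b)`
cancels the diagonal. The matrix determinant lemma reduces `det (x - S)` to a `2 × 2`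
determinant, so the spectrum consists of `-a = 2n - 1` and `-b = 2m - 1` with multiplicities
`m - 1` and `n - 1`, together with the two roots of a quadratic. For `m, n ≥ 2` the product of
these two roots is nonpositive, so the sum of their absolute values is the square root of the
discriminant, which is `U(m,n)`.
-/

open Polynomial Matrix

/-- The Seidel matrix of the complete 3-uniform bipartite hypergraph `C³_{m,n}`. -/
noncomputable def seidelS (m n : ℕ) : Matrix (Fin m ⊕ Fin n) (Fin m ⊕ Fin n) ℝ :=
  fun i j =>
    if i = j then 0
    else
      match i, j with
      | Sum.inl _, Sum.inl _ => 1 - 2 * (n : ℝ)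
      | Sum.inr _, Sum.inr _ => 1 - 2 * (m : ℝ)
      | _, _ => 1 - 2 * ((m : ℝ) + (n : ℝ) - 2)

/-- Type-I hyperedge-deleted Seidel matrix. -/
noncomputable def seidelI (m n : ℕ) : Matrix (Fin m ⊕ Fin n) (Fin m ⊕ Fin n) ℝ :=
  fun i j =>
    match i, j with
    | Sum.inl a, Sum.inr b =>
        if a.val = 0 ∧ b.val ≤ 1 then 1 - 2 * ((m : ℝ) + (n : ℝ) - 3)
        else seidelS m n (Sum.inl a) (Sum.inr b)
    | Sum.inr b, Sum.inl a =>
        if a.val = 0 ∧ b.val ≤ 1 then 1 - 2 * ((m : ℝ) + (n : ℝ) - 3)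
        else seidelS m n (Sum.inr b) (Sum.inl a)
    | Sum.inr a, Sum.inr b =>
        if (a.val = 0 ∧ b.val = 1) ∨ (a.val = 1 ∧ b.val = 0) then 1 - 2 * ((m : ℝ) - 1)
        else seidelS m n (Sum.inr a) (Sum.inr b)
    | Sum.inl a, Sum.inl b => seidelS m n (Sum.inl a) (Sum.inl b)

/-- Type-II hyperedge-deleted Seidel matrix. -/
noncomputable def seidelII (m n : ℕ) : Matrix (Fin m ⊕ Fin n) (Fin m ⊕ Fin n) ℝ :=
  fun i j =>
    match i, j with
    | Sum.inl a, Sum.inl b =>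
        if (a.val = 0 ∧ b.val = 1) ∨ (a.val = 1 ∧ b.val = 0) then 1 - 2 * ((n : ℝ) - 1)
        else seidelS m n (Sum.inl a) (Sum.inl b)
    | Sum.inl a, Sum.inr b =>
        if a.val ≤ 1 ∧ b.val = 0 then 1 - 2 * ((m : ℝ) + (n : ℝ) - 3)
        else seidelS m n (Sum.inl a) (Sum.inr b)
    | Sum.inr b, Sum.inl a =>
        if a.val ≤ 1 ∧ b.val = 0 then 1 - 2 * ((m : ℝ) + (n : ℝ) - 3)
        else seidelS m n (Sum.inr b) (Sum.inl a)
    | Sum.inr a, Sum.inr b => seidelS m n (Sum.inr a) (Sum.inr b)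

/-- Seidel energy: sum of absolute values of the eigenvalues (roots of the
characteristic polynomial, with multiplicity). -/
noncomputable def seidelEnergy {k : Type*} [Fintype k] [DecidableEq k]
    (M : Matrix k k ℝ) : ℝ :=
  (M.charpoly.roots.map (fun x => |x|)).sum

/-- The discriminant `U(m,n)` appearing in the closed form of the Seidel energy. -/
noncomputable def Ufun (m n : ℕ) : ℝ :=
  16 * (m:ℝ)^3 * n + (n:ℝ)^2 + 2 * (m:ℝ) * n * (8*(n:ℝ)^2 - 40*n + 49)
    + (m:ℝ)^2 * (32*(n:ℝ)^2 - 80*n + 1)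

namespace Matrix

def blockIndicator (R : Type*) [Zero R] [One R] (ι κ : Type*) : Matrix (ι ⊕ κ) (Fin 2) R :=
  of (Sum.elim (fun _ => ![1, 0]) (fun _ => ![0, 1]))

variable {K : Type*} [Field K] {ι κ : Type*} [Fintype ι] [Fintype κ] [DecidableEq ι]
  [DecidableEq κ]

lemma blockIndicator_transpose_mul_diagonal_mul (x y : K) :
    (blockIndicator K ι κ)ᵀ * diagonal (Sum.elim (fun _ : ι => x) (fun _ : κ => y)) *
        blockIndicator K ι κ
      = diagonal (![Fintype.card ι * x, Fintype.card κ * y] : Fin 2 → K) := by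
  ext s t
  fin_cases s <;> fin_cases t <;>
    simp [blockIndicator, mul_apply, Fintype.sum_sum_type, diagonal_apply]

lemma det_diagonal_sub_blockIndicator_mul [Nonempty ι] [Nonempty κ] {x y : K}
    (hx : x ≠ 0) (hy : y ≠ 0) (B : Matrix (Fin 2) (Fin 2) K) :
    (diagonal (Sum.elim (fun _ : ι => x) (fun _ : κ => y)) -
        blockIndicator K ι κ * B * (blockIndicator K ι κ)ᵀ).det
      = x ^ (Fintype.card ι - 1) * y ^ (Fintype.card κ - 1) *
        ((x - Fintype.card ι * B 0 0) * (y - Fintype.card κ * B 1 1)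
          - Fintype.card ι * Fintype.card κ * B 0 1 * B 1 0) := by
  set D : Matrix (ι ⊕ κ) (ι ⊕ κ) K := diagonal (Sum.elim (fun _ : ι => x) (fun _ : κ => y))
  have hD : IsUnit D.det := by simp [D, det_diagonal, Fintype.prod_sum_type, hx, hy]
  have hDinv : D⁻¹ = diagonal (Sum.elim (fun _ : ι => x⁻¹) (fun _ : κ => y⁻¹)) := by
    refine inv_eq_left_inv ?_
    rw [diagonal_mul_diagonal, ← diagonal_one]
    congr 1
    ext (i | i) <;> simp [hx, hy]
  rw [sub_eq_add_neg, ← Matrix.mul_neg, det_add_mul _ _ hD, hDinv]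
  simp only [Matrix.neg_mul, ← Matrix.mul_assoc, blockIndicator_transpose_mul_diagonal_mul,
    ← sub_eq_add_neg, det_fin_two]
  simp only [D, det_diagonal, Fintype.prod_sum_type, Sum.elim_inl, Sum.elim_inr,
    Finset.prod_const, Finset.card_univ, sub_apply, one_apply_eq, one_apply_ne, diagonal_mul,
    cons_val_zero, cons_val_one, cons_val_fin_one, ne_eq, zero_ne_one, one_ne_zero,
    not_false_eq_true, zero_sub, mul_neg, neg_mul, neg_neg]
  rw [← pow_sub_one_mul Fintype.card_ne_zero x, ← pow_sub_one_mul Fintype.card_ne_zero y]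
  field_simp

lemma charpoly_blockIndicator_mul_sub_diagonal [Infinite K] [Nonempty ι] [Nonempty κ]
    (a b c d : K) :
    (blockIndicator K ι κ * !![a, c; d, b] * (blockIndicator K ι κ)ᵀ -
        diagonal (Sum.elim (fun _ : ι => a) (fun _ : κ => b))).charpoly
      = (X + C a) ^ (Fintype.card ι - 1) * (X + C b) ^ (Fintype.card κ - 1) *
        ((X - C ((Fintype.card ι - 1) * a)) * (X - C ((Fintype.card κ - 1) * b))
          - C (Fintype.card ι * Fintype.card κ * c * d)) := by
  refine eq_of_infinite_eval_eq _ _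
    (((Set.finite_singleton (-b)).insert (-a)).infinite_compl.mono fun r hr => ?_)
  simp only [Set.mem_compl_iff, Set.mem_insert_iff, Set.mem_singleton_iff, not_or] at hr
  have hra : r + a ≠ 0 := fun h => hr.1 (eq_neg_of_add_eq_zero_left h)
  have hrb : r + b ≠ 0 := fun h => hr.2 (eq_neg_of_add_eq_zero_left h)
  have hshift : scalar (ι ⊕ κ) r - (blockIndicator K ι κ * !![a, c; d, b] *
        (blockIndicator K ι κ)ᵀ - diagonal (Sum.elim (fun _ : ι => a) (fun _ : κ => b)))
      = diagonal (Sum.elim (fun _ : ι => r + a) (fun _ : κ => r + b)) -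
        blockIndicator K ι κ * !![a, c; d, b] * (blockIndicator K ι κ)ᵀ := by
    rw [scalar_apply, sub_sub_eq_add_sub, diagonal_add]
    congr 2
    ext (i | i) <;> rfl
  show eval r _ = eval r _
  rw [eval_charpoly, hshift, det_diagonal_sub_blockIndicator_mul hra hrb]
  simp only [eval_mul, eval_pow, eval_add, eval_sub, eval_X, eval_C, of_apply, cons_val',
    cons_val_zero, cons_val_one, empty_val', cons_val_fin_one]
  ring

end Matrix

lemma X_sub_C_mul_X_sub_C_sub_C {u v w : ℝ} (h : 0 ≤ (u - v) ^ 2 + 4 * w) :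
    (X - C u) * (X - C v) - C w =
      (X - C ((u + v + √((u - v) ^ 2 + 4 * w)) / 2)) *
        (X - C ((u + v - √((u - v) ^ 2 + 4 * w)) / 2)) := by
  have hs := Real.sq_sqrt h
  refine Polynomial.funext fun r => ?_
  simp only [eval_mul, eval_sub, eval_X, eval_C]
  linear_combination (1 / 4 : ℝ) * hs

lemma abs_add_sqrt_div_two_add_abs_sub_sqrt_div_two {u v w : ℝ} (h : u * v ≤ w) :
    |(u + v + √((u - v) ^ 2 + 4 * w)) / 2| + |(u + v - √((u - v) ^ 2 + 4 * w)) / 2|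
      = √((u - v) ^ 2 + 4 * w) := by
  have hle := abs_le.mp (Real.abs_le_sqrt (x := u + v) (y := (u - v) ^ 2 + 4 * w) (by nlinarith))
  rw [abs_of_nonneg (by linarith), abs_of_nonpos (by linarith)]
  ring

lemma seidelEnergy_eq_of_charpoly_eq {k : Type*} [Fintype k] [DecidableEq k]
    {M : Matrix k k ℝ} {α β u v w : ℝ} {p q : ℕ} (hα : 0 ≤ α) (hβ : 0 ≤ β) (huvw : u * v ≤ w)
    (h : M.charpoly = (X - C α) ^ p * (X - C β) ^ q * ((X - C u) * (X - C v) - C w)) :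
    seidelEnergy M = p * α + q * β + √((u - v) ^ 2 + 4 * w) := by
  rw [X_sub_C_mul_X_sub_C_sub_C (by nlinarith [sq_nonneg (u + v)])] at h
  have hprod : M.charpoly = ((Multiset.replicate p α + Multiset.replicate q β +
      {(u + v + √((u - v) ^ 2 + 4 * w)) / 2, (u + v - √((u - v) ^ 2 + 4 * w)) / 2}).map
        fun r => X - C r).prod := by
    rw [h]
    simp only [Multiset.insert_eq_cons, Multiset.add_cons, Multiset.map_cons, Multiset.map_add,
      Multiset.map_replicate, Multiset.map_singleton, Multiset.prod_cons, Multiset.prod_add,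
      Multiset.prod_replicate, Multiset.prod_singleton]
    ring
  rw [seidelEnergy, hprod, roots_multiset_prod_X_sub_C]
  simp only [Multiset.insert_eq_cons, Multiset.map_add, Multiset.sum_add, Multiset.map_replicate,
    Multiset.sum_replicate, Multiset.map_cons, Multiset.sum_cons, Multiset.map_singleton,
    Multiset.sum_singleton, nsmul_eq_mul, abs_of_nonneg hα, abs_of_nonneg hβ]
  linarith [abs_add_sqrt_div_two_add_abs_sub_sqrt_div_two huvw]

lemma seidelS_eq (m n : ℕ) :
    seidelS m n = blockIndicator ℝ (Fin m) (Fin n) *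
        !![1 - 2 * (n : ℝ), 1 - 2 * ((m : ℝ) + n - 2); 1 - 2 * ((m : ℝ) + n - 2), 1 - 2 * (m : ℝ)] *
        (blockIndicator ℝ (Fin m) (Fin n))ᵀ -
      diagonal (Sum.elim (fun _ : Fin m => 1 - 2 * (n : ℝ)) (fun _ : Fin n => 1 - 2 * (m : ℝ))) := by
  ext (i | i) (j | j)
  · by_cases hij : i = j <;> simp [seidelS, blockIndicator, mul_apply, hij]
  · simp [seidelS, blockIndicator, mul_apply]
  · simp [seidelS, blockIndicator, mul_apply]
  · by_cases hij : i = j <;> simp [seidelS, blockIndicator, mul_apply, hij]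

lemma charpoly_seidelS (m n : ℕ) [NeZero m] [NeZero n] :
    (seidelS m n).charpoly =
      (X - C (2 * (n : ℝ) - 1)) ^ (m - 1) * (X - C (2 * (m : ℝ) - 1)) ^ (n - 1) *
        ((X - C (((m : ℝ) - 1) * (1 - 2 * n))) * (X - C (((n : ℝ) - 1) * (1 - 2 * m)))
          - C ((m : ℝ) * n * (2 * m + 2 * n - 5) ^ 2)) := by
  rw [seidelS_eq, charpoly_blockIndicator_mul_sub_diagonal]
  simp only [Fintype.card_fin, map_add, map_sub, map_mul, map_pow, map_one, map_ofNat, map_natCast]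
  ring

lemma seidelS_quadratic_coeff_le {m n : ℝ} (hm : 2 ≤ m) (hn : 2 ≤ n) :
    ((m - 1) * (1 - 2 * n)) * ((n - 1) * (1 - 2 * m)) ≤ m * n * (2 * m + 2 * n - 5) ^ 2 :=
  calc ((m - 1) * (1 - 2 * n)) * ((n - 1) * (1 - 2 * m))
      = ((m - 1) * (2 * m - 1)) * ((n - 1) * (2 * n - 1)) := by ring
    _ ≤ (m * (2 * m + 2 * n - 5)) * (n * (2 * m + 2 * n - 5)) := by
      gcongr ?_ * ?_ <;> nlinarith
    _ = m * n * (2 * m + 2 * n - 5) ^ 2 := by ring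

theorem stmt3 (m n : ℕ) (hm : 2 ≤ m) (hn : 2 ≤ n) :
    seidelEnergy (seidelS m n) =
      ((m:ℝ) - 1) * (2*(n:ℝ) - 1) + ((n:ℝ) - 1) * (2*(m:ℝ) - 1) +
        Real.sqrt (Ufun m n) := by
  have : NeZero m := ⟨by omega⟩
  have : NeZero n := ⟨by omega⟩
  have hmR : (2 : ℝ) ≤ m := by exact_mod_cast hm
  have hnR : (2 : ℝ) ≤ n := by exact_mod_cast hn
  have hU : Ufun m n = ((((m : ℝ) - 1) * (1 - 2 * n)) - (((n : ℝ) - 1) * (1 - 2 * m))) ^ 2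
      + 4 * ((m : ℝ) * n * (2 * m + 2 * n - 5) ^ 2) := by
    rw [Ufun]
    ring
  rw [seidelEnergy_eq_of_charpoly_eq (by linarith) (by linarith)
    (seidelS_quadratic_coeff_le hmR hnR) (charpoly_seidelS m n), hU,
    Nat.cast_pred (by omega), Nat.cast_pred (by omega)]
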